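/- If (log n + ω(1))/n ≤ p ≤ (1.1 log n)/n, then asymptotically almost surely in G ~ G(n,p): for every vertex set S with n/(log n)³ ≤ |S| ≤ n/2, the number of edges between S and its complement is at least (log n/10)·|S|. -/

import Mathlib

open scoped Classical
open Filter

/-- Number of edges of a finite simple graph. -/
noncomputable def edgeCount {V : Type*} [Fintype V] (G : SimpleGraph V) : ℕ :=
  G.edgeFinset.card

/-- `G` contains `k` pairwise edge-disjoint spanning trees. -/
def HasDisjSpanningTrees {V : Type*} (G : SimpleGraph V) (k : ℕ) : Prop :=
  ∃ f : Fin k → SimpleGraph V, (∀ i, f i ≤ G) ∧ (∀ i, (f i).IsTree) ∧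
    ∀ i j, i ≠ j → Disjoint (f i).edgeSet (f j).edgeSet

/-- Spanning tree packing number: the maximum number of pairwise
edge-disjoint spanning trees of `G`. -/
noncomputable def stp {V : Type*} (G : SimpleGraph V) : ℕ :=
  sSup {k | HasDisjSpanningTrees G k}

/-- Number of edges of `G` between `S` and its complement. -/
noncomputable def crossCount {V : Type*} [Fintype V] (G : SimpleGraph V) (S : Finset V) : ℕ :=
  ((S ×ˢ Sᶜ).filter fun e => G.Adj e.1 e.2).card

/-- Number of crossing edges of a partition `P` of the vertex set:
edges whose two endpoints lie in different parts of `P`. -/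
noncomputable def partCross {V : Type*} [Fintype V] (G : SimpleGraph V)
    (P : Finpartition (Finset.univ : Finset V)) : ℕ :=
  (G.edgeFinset.filter fun e => ∀ t ∈ P.parts, ¬ ∀ v ∈ e, v ∈ t).card

/-- Probability that the Erdős–Rényi random graph `G(n,p)` satisfies `Q`. -/
noncomputable def grProb (n : ℕ) (p : ℝ) (Q : SimpleGraph (Fin n) → Prop) : ℝ :=
  ∑ G : SimpleGraph (Fin n),
    if Q G then p ^ edgeCount G * (1 - p) ^ (n.choose 2 - edgeCount G) else 0


/-! For a fixed `S` with `|S| = s ≤ n / 2` the cut `E(S, S̄)` is binomial with mean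
`p s (n - s) ≥ s log n / 2`, so the Chernoff bound `P(X < T) ≤ exp (2T - (1 - e⁻²) 𝔼X)` gives
`P(|E(S, S̄)| < s log n / 10) ≤ exp (-s log n / 5)`. There are at most `(e n / s)^s ≤ (e log³ n)^s`
sets of size `s ≥ n / log³ n`, and `e log³ n · exp (-log n / 5) ≤ exp (-log n / 10)`, so each size
contributes at most `exp (-s log n / 10) ≤ n⁻²` to the union bound, which is therefore `O(1/n)`. -/

open Finset Real

section EdgeSubsets

variable {V : Type*} [Fintype V] [DecidableEq V]

lemma edgeFinset_fromEdgeSet_of_subset {A : Finset (Sym2 V)}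
    (hA : A ⊆ (⊤ : SimpleGraph V).edgeFinset)
    {inst : Fintype (SimpleGraph.fromEdgeSet (A : Set (Sym2 V))).edgeSet} :
    (SimpleGraph.fromEdgeSet (A : Set (Sym2 V))).edgeFinset = A := by
  ext e
  have := @hA e
  simp only [SimpleGraph.mem_edgeFinset, SimpleGraph.edgeSet_fromEdgeSet, SimpleGraph.edgeSet_top,
    Set.mem_sdiff, mem_coe] at this ⊢
  tauto

theorem sum_simpleGraph_eq_sum_powerset {M : Type*} [AddCommMonoid M] (f : Finset (Sym2 V) → M) :
    ∑ G : SimpleGraph V, f G.edgeFinset =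
      ∑ A ∈ (⊤ : SimpleGraph V).edgeFinset.powerset, f A := by
  refine sum_nbij' (fun G => G.edgeFinset) (fun A => SimpleGraph.fromEdgeSet A)
    (fun G _ => mem_powerset.2 (SimpleGraph.edgeFinset_mono le_top)) (fun _ _ => mem_univ _)
    (fun G _ => by simp) (fun A hA => edgeFinset_fromEdgeSet_of_subset (mem_powerset.1 hA))
    (fun _ _ => rfl)

def crossEdges (S : Finset V) : Finset (Sym2 V) :=
  (S ×ˢ Sᶜ).image fun q => s(q.1, q.2)

lemma injOn_sym2_mk_product_compl (S : Finset V) :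
    Set.InjOn (fun q : V × V => s(q.1, q.2)) ↑(S ×ˢ Sᶜ) := by
  rintro ⟨a, b⟩ hab ⟨c, d⟩ hcd h
  simp only [coe_product, Set.mem_prod, mem_coe, mem_compl] at hab hcd
  rcases Sym2.eq_iff.1 h with ⟨rfl, rfl⟩ | ⟨rfl, rfl⟩
  · rfl
  · exact absurd hab.1 hcd.2

lemma card_crossEdges (S : Finset V) : #(crossEdges S) = #S * #Sᶜ := by
  rw [crossEdges, card_image_of_injOn (injOn_sym2_mk_product_compl S), card_product]

lemma crossEdges_subset_edgeFinset_top (S : Finset V) :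
    crossEdges S ⊆ (⊤ : SimpleGraph V).edgeFinset := by
  simp only [crossEdges, subset_iff, mem_image, mem_product, mem_compl, SimpleGraph.mem_edgeFinset,
    SimpleGraph.edgeSet_top, forall_exists_index, and_imp]
  rintro _ ⟨a, b⟩ ha hb rfl
  exact fun h => hb (Sym2.mk_isDiag_iff.1 h ▸ ha)

lemma crossCount_eq_card_edgeFinset_inter_crossEdges (G : SimpleGraph V) (S : Finset V) :
    crossCount G S = #(G.edgeFinset ∩ crossEdges S) := by
  have himage : G.edgeFinset ∩ crossEdges S =
      ((S ×ˢ Sᶜ).filter fun e => G.Adj e.1 e.2).image fun q => s(q.1, q.2) := by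
    ext e
    simp only [crossEdges, mem_inter, mem_image, mem_filter, SimpleGraph.mem_edgeFinset]
    constructor
    · rintro ⟨he, q, hq, rfl⟩
      exact ⟨q, ⟨hq, he⟩, rfl⟩
    · rintro ⟨q, ⟨hq, he⟩, rfl⟩
      exact ⟨he, q, hq, rfl⟩
  rw [himage, crossCount, card_image_of_injOn
    ((injOn_sym2_mk_product_compl S).mono (coe_subset.2 (filter_subset _ _)))]
  congr 1
  ext
  simp

end EdgeSubsets

theorem sum_powerset_pow_mul_pow_mul_pow_card_inter {ι R : Type*} [CommSemiring R]
    [DecidableEq ι] (U E : Finset ι) (a b x : R) :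
    ∑ A ∈ U.powerset, a ^ #A * b ^ (#U - #A) * x ^ #(A ∩ E) =
      (a * x + b) ^ #(U ∩ E) * (a + b) ^ #(U \ E) := by
  have hsplit : ∀ i, (if i ∈ E then a * x + b else a + b) = a * (if i ∈ E then x else 1) + b := by
    intro i; split_ifs <;> ring
  rw [← prod_const, ← prod_const, ← filter_mem_eq_inter, ← filter_notMem_eq_sdiff, ← prod_ite,
    Finset.prod_congr rfl fun i _ => hsplit i, prod_add]
  refine sum_congr rfl fun A hA => ?_
  rw [prod_mul_distrib, prod_ite_mem, prod_const, prod_const, prod_const,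
    card_sdiff_of_subset (mem_powerset.1 hA)]
  ring

section RandomGraph

lemma sum_pow_edgeCount_mul_pow_eq_one (n : ℕ) (p : ℝ) :
    ∑ G : SimpleGraph (Fin n), p ^ edgeCount G * (1 - p) ^ (n.choose 2 - edgeCount G) = 1 := by
  have hC : n.choose 2 = #(⊤ : SimpleGraph (Fin n)).edgeFinset := by
    rw [SimpleGraph.card_edgeFinset_top_eq_card_choose_two, Fintype.card_fin]
  rw [hC]
  exact (sum_simpleGraph_eq_sum_powerset fun A => p ^ #A * (1 - p) ^ (_ - #A)).trans
    ((sum_pow_mul_eq_add_pow p (1 - p) _).trans (by simp))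

variable {n : ℕ} {p : ℝ}

lemma grProb_eq_one_sub_grProb_not (Q : SimpleGraph (Fin n) → Prop) :
    grProb n p Q = 1 - grProb n p (fun G => ¬ Q G) := by
  rw [eq_sub_iff_add_eq, ← sum_pow_edgeCount_mul_pow_eq_one n p, grProb, grProb,
    ← sum_add_distrib]
  refine sum_congr rfl fun G _ => ?_
  split_ifs <;> simp_all

lemma grProb_nonneg (hp0 : 0 ≤ p) (hp1 : p ≤ 1) (Q : SimpleGraph (Fin n) → Prop) :
    0 ≤ grProb n p Q :=
  sum_nonneg fun G _ => by
    split_ifs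
    exacts [mul_nonneg (pow_nonneg hp0 _) (pow_nonneg (sub_nonneg.2 hp1) _), le_rfl]

lemma grProb_le_one (hp0 : 0 ≤ p) (hp1 : p ≤ 1) (Q : SimpleGraph (Fin n) → Prop) :
    grProb n p Q ≤ 1 := by
  rw [grProb_eq_one_sub_grProb_not]
  linarith [grProb_nonneg hp0 hp1 fun G => ¬ Q G]

theorem grProb_le_sum_of_imp_exists (hp0 : 0 ≤ p) (hp1 : p ≤ 1) {Q : SimpleGraph (Fin n) → Prop}
    {ι : Type*} (I : Finset ι) (B : ι → SimpleGraph (Fin n) → Prop)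
    (hQ : ∀ G, Q G → ∃ i ∈ I, B i G) :
    grProb n p Q ≤ ∑ i ∈ I, grProb n p (B i) := by
  simp only [grProb]
  rw [sum_comm]
  refine sum_le_sum fun G _ => ?_
  set w := p ^ edgeCount G * (1 - p) ^ (n.choose 2 - edgeCount G)
  have hw : 0 ≤ w := mul_nonneg (pow_nonneg hp0 _) (pow_nonneg (sub_nonneg.2 hp1) _)
  have hterm : ∀ i ∈ I, 0 ≤ if B i G then w else 0 := fun i _ => by split_ifs <;> simp [hw]
  split_ifs with hG
  · obtain ⟨i, hi, hB⟩ := hQ G hG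
    simpa [hB] using single_le_sum hterm hi
  · exact sum_nonneg hterm

/- Chernoff: Markov's inequality for `exp (-t |G ∩ E|)`, whose mean factorizes over the pairs
by `sum_powerset_pow_mul_pow_mul_pow_card_inter`. -/
theorem grProb_card_edgeFinset_inter_lt_le (hp0 : 0 ≤ p) (hp1 : p ≤ 1)
    {E : Finset (Sym2 (Fin n))} (hE : E ⊆ (⊤ : SimpleGraph (Fin n)).edgeFinset) (T : ℝ)
    {t : ℝ} (ht : 0 ≤ t) :
    grProb n p (fun G => (#(G.edgeFinset ∩ E) : ℝ) < T) ≤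
      exp (t * T - (1 - exp (-t)) * p * #E) := by
  set U := (⊤ : SimpleGraph (Fin n)).edgeFinset
  have hC : n.choose 2 = #U := by
    rw [SimpleGraph.card_edgeFinset_top_eq_card_choose_two, Fintype.card_fin]
  have hmarkov : ∀ A : Finset (Sym2 (Fin n)),
      (if (#(A ∩ E) : ℝ) < T then p ^ #A * (1 - p) ^ (#U - #A) else 0) ≤
        exp (t * T) * (p ^ #A * (1 - p) ^ (#U - #A) * exp (-t) ^ #(A ∩ E)) := by
    intro A
    have hw : 0 ≤ p ^ #A * (1 - p) ^ (#U - #A) :=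
      mul_nonneg (pow_nonneg hp0 _) (pow_nonneg (sub_nonneg.2 hp1) _)
    split_ifs with hA
    · rw [← exp_nat_mul, ← mul_assoc, mul_comm (exp _), mul_assoc, ← exp_add]
      refine le_mul_of_one_le_right hw (one_le_exp ?_)
      nlinarith
    · positivity
  have hbase : p * exp (-t) + (1 - p) ≤ exp (-((1 - exp (-t)) * p)) := by
    linarith [add_one_le_exp (-((1 - exp (-t)) * p))]
  calc grProb n p (fun G => (#(G.edgeFinset ∩ E) : ℝ) < T)
      = ∑ A ∈ U.powerset, if (#(A ∩ E) : ℝ) < T then p ^ #A * (1 - p) ^ (#U - #A) else 0 := by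
        rw [grProb, ← hC]
        exact sum_simpleGraph_eq_sum_powerset
          fun A => if (#(A ∩ E) : ℝ) < T then p ^ #A * (1 - p) ^ (n.choose 2 - #A) else 0
    _ ≤ exp (t * T) * ∑ A ∈ U.powerset, p ^ #A * (1 - p) ^ (#U - #A) * exp (-t) ^ #(A ∩ E) := by
        rw [mul_sum]
        exact sum_le_sum fun A _ => hmarkov A
    _ = exp (t * T) * (p * exp (-t) + (1 - p)) ^ #E := by
        rw [sum_powerset_pow_mul_pow_mul_pow_card_inter, inter_eq_right.2 hE]
        simp
    _ ≤ exp (t * T) * exp (-((1 - exp (-t)) * p)) ^ #E := by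
        gcongr
    _ = exp (t * T - (1 - exp (-t)) * p * #E) := by
        rw [← exp_nat_mul, ← exp_add]
        ring_nf

theorem grProb_crossCount_lt_le (hp0 : 0 ≤ p) (hp1 : p ≤ 1) (S : Finset (Fin n)) (T : ℝ)
    {t : ℝ} (ht : 0 ≤ t) :
    grProb n p (fun G => (crossCount G S : ℝ) < T) ≤
      exp (t * T - (1 - exp (-t)) * p * (#S * #Sᶜ : ℕ)) := by
  simp only [crossCount_eq_card_edgeFinset_inter_crossEdges, ← card_crossEdges]
  exact grProb_card_edgeFinset_inter_lt_le hp0 hp1 (crossEdges_subset_edgeFinset_top S) T ht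

lemma exp_neg_two_le_one_fifth : exp (-2) ≤ 1 / 5 := by
  rw [exp_neg, inv_eq_one_div]
  gcongr
  linarith [quadratic_le_exp_of_nonneg (zero_le_two : (0 : ℝ) ≤ 2)]

theorem grProb_crossCount_lt_le_exp_neg (hp0 : 0 ≤ p) (hp1 : p ≤ 1)
    (hnp : log n ≤ n * p) {S : Finset (Fin n)} (hS : (#S : ℝ) ≤ n / 2) :
    grProb n p (fun G => (crossCount G S : ℝ) < log n / 10 * #S) ≤ exp (-(#S * log n / 5)) := by
  refine (grProb_crossCount_lt_le hp0 hp1 S _ zero_le_two).trans (exp_le_exp.2 ?_)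
  have hSn : #S ≤ n := (card_le_univ S).trans_eq (Fintype.card_fin n)
  have hcompl : ((#S * #Sᶜ : ℕ) : ℝ) = #S * (n - #S) := by
    rw [Nat.cast_mul, card_compl, Fintype.card_fin, Nat.cast_sub hSn]
  have hmean : log n * #S / 2 ≤ p * (#S * (n - #S)) := by
    have := mul_le_mul_of_nonneg_right hnp (by positivity : (0 : ℝ) ≤ #S / 2)
    nlinarith [mul_le_mul_of_nonneg_left hS (mul_nonneg hp0 (Nat.cast_nonneg #S))]
  have hpos : 0 ≤ p * (#S * (n - #S)) := by
    have : (#S : ℝ) ≤ n := by exact_mod_cast hSn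
    exact mul_nonneg hp0 (mul_nonneg (Nat.cast_nonneg _) (by linarith))
  rw [hcompl]
  nlinarith [exp_neg_two_le_one_fifth]

end RandomGraph

theorem choose_le_exp_one_mul_div_pow (n k : ℕ) : (n.choose k : ℝ) ≤ (exp 1 * n / k) ^ k := by
  rcases k.eq_zero_or_pos with rfl | hk
  · simp
  have hk' : (0 : ℝ) < k := Nat.cast_pos.2 hk
  calc (n.choose k : ℝ) ≤ n ^ k / k.factorial := Nat.choose_le_pow_div k n
    _ = (n / k) ^ k * (k ^ k / k.factorial) := by rw [div_pow]; field_simp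
    _ ≤ (n / k) ^ k * exp k := by gcongr; exact pow_div_factorial_le_exp _ hk'.le k
    _ = (exp 1 * n / k) ^ k := by rw [← exp_one_pow]; ring

theorem choose_mul_exp_neg_le {n k : ℕ} (hlog : 10 * (1 + 3 * log (log n)) ≤ log n)
    (hn : 20 * log n ^ 3 ≤ n) (hk : n / log n ^ 3 ≤ k) :
    (n.choose k : ℝ) * exp (-(k * log n / 5)) ≤ 1 / n ^ 2 := by
  have hL : 0 < log n := by
    refine (log_natCast_nonneg n).lt_of_ne fun h => ?_
    rw [← h] at hlog
    norm_num at hlog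
  set L := log n
  have hn0 : (0 : ℝ) < n := by nlinarith [pow_pos hL 3]
  have hk0 : (0 : ℝ) < k := lt_of_lt_of_le (by positivity) hk
  have hnk : n / k ≤ L ^ 3 := by
    rwa [div_le_iff₀ hk0, mul_comm, ← div_le_iff₀ (by positivity)]
  have hfactor : exp 1 * n / k * exp (-(L / 5)) ≤ exp (-(L / 10)) := calc
    exp 1 * n / k * exp (-(L / 5)) ≤ exp 1 * L ^ 3 * exp (-(L / 5)) := by
        rw [mul_div_assoc]; gcongr
    _ = exp (1 + 3 * log L - L / 5) := by
        have hL3 : exp (3 * log L) = L ^ 3 := by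
          rw [show (3 : ℝ) * log L = log (L ^ 3) by rw [log_pow]; norm_num, exp_log (by positivity)]
        rw [exp_sub, exp_add, hL3, exp_neg]
        ring
    _ ≤ exp (-(L / 10)) := exp_le_exp.2 (by linarith)
  have hk20 : 20 ≤ (k : ℝ) := le_trans (by rwa [le_div_iff₀ (by positivity)]) hk
  calc (n.choose k : ℝ) * exp (-(k * L / 5))
      ≤ (exp 1 * n / k) ^ k * exp (-(L / 5)) ^ k := by
        rw [← exp_nat_mul]
        gcongr
        · exact choose_le_exp_one_mul_div_pow n k
        · exact (by ring : _ = _).le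
    _ ≤ exp (-(L / 10)) ^ k := by rw [← mul_pow]; gcongr
    _ ≤ exp (-(2 * L)) := by rw [← exp_nat_mul]; exact exp_le_exp.2 (by nlinarith)
    _ = 1 / n ^ 2 := by rw [exp_neg, mul_comm, exp_mul, exp_log hn0, one_div]; norm_cast

theorem sum_exp_neg_card_mul_log_le {n : ℕ} (hlog : 10 * (1 + 3 * log (log n)) ≤ log n)
    (hn : 20 * log n ^ 3 ≤ n) (𝒮 : Finset (Finset (Fin n)))
    (h𝒮 : ∀ S ∈ 𝒮, n / log n ^ 3 ≤ (#S : ℝ)) :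
    ∑ S ∈ 𝒮, exp (-(#S * log n / 5)) ≤ 2 / n := by
  set f : ℕ → ℝ := fun k => if n / log n ^ 3 ≤ (k : ℝ) then exp (-(k * log n / 5)) else 0
  have hf : ∀ k, 0 ≤ f k := fun k => by positivity
  have hterm : ∀ k, (n.choose k : ℝ) * f k ≤ 1 / n ^ 2 := fun k => by
    by_cases hk : n / log n ^ 3 ≤ (k : ℝ)
    · simpa [f, hk] using choose_mul_exp_neg_le hlog hn hk
    · simp only [f, hk, if_false, mul_zero]; positivity
  have hn1 : (1 : ℝ) ≤ n :=
    Nat.one_le_cast.2 (Nat.pos_of_ne_zero (by rintro rfl; norm_num at hlog))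
  calc ∑ S ∈ 𝒮, exp (-(#S * log n / 5))
      = ∑ S ∈ 𝒮, f #S := sum_congr rfl fun S hS => by simp [f, h𝒮 S hS]
    _ ≤ ∑ S : Finset (Fin n), f #S := sum_le_univ_sum_of_nonneg fun S => hf _
    _ = ∑ k ∈ range (n + 1), (n.choose k : ℝ) * f k := by
        rw [← powerset_univ, sum_powerset_apply_card, card_univ, Fintype.card_fin]
        simp only [nsmul_eq_mul]
    _ ≤ ∑ _k ∈ range (n + 1), 1 / (n : ℝ) ^ 2 := sum_le_sum fun k _ => hterm k
    _ = (n + 1) / n ^ 2 := by simp [div_eq_mul_inv]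
    _ ≤ 2 / n := by
        rw [div_le_div_iff₀ (by positivity) (by positivity)]
        nlinarith

theorem one_sub_two_div_le_grProb_expansion {n : ℕ} {p : ℝ} (hp0 : 0 ≤ p) (hp1 : p ≤ 1)
    (hnp : log n ≤ n * p) (hlog : 10 * (1 + 3 * log (log n)) ≤ log n)
    (hn : 20 * log n ^ 3 ≤ n) :
    1 - 2 / n ≤ grProb n p fun G => ∀ S : Finset (Fin n),
      n / log n ^ 3 ≤ (#S : ℝ) → (#S : ℝ) ≤ n / 2 → log n / 10 * #S ≤ (crossCount G S : ℝ) := by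
  set medium := (univ : Finset (Finset (Fin n))).filter
    fun S => n / log n ^ 3 ≤ (#S : ℝ) ∧ (#S : ℝ) ≤ n / 2
  rw [grProb_eq_one_sub_grProb_not]
  suffices hbad : grProb n p (fun G => ¬ ∀ S : Finset (Fin n),
      n / log n ^ 3 ≤ (#S : ℝ) → (#S : ℝ) ≤ n / 2 →
        log n / 10 * #S ≤ (crossCount G S : ℝ)) ≤ 2 / n by
    linarith
  calc _ ≤ ∑ S ∈ medium, grProb n p (fun G => (crossCount G S : ℝ) < log n / 10 * #S) := by
        refine grProb_le_sum_of_imp_exists hp0 hp1 medium _ fun G hG => ?_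
        push Not at hG
        obtain ⟨S, hlo, hhi, hcut⟩ := hG
        exact ⟨S, mem_filter.2 ⟨mem_univ S, hlo, hhi⟩, hcut⟩
    _ ≤ ∑ S ∈ medium, exp (-(#S * log n / 5)) := sum_le_sum fun S hS =>
        grProb_crossCount_lt_le_exp_neg hp0 hp1 hnp (mem_filter.1 hS).2.2
    _ ≤ 2 / n := sum_exp_neg_card_mul_log_le hlog hn medium fun S hS => (mem_filter.1 hS).2.1

lemma eventually_mul_log_pow_le {c : ℝ} (hc : 0 < c) (k : ℕ) :
    ∀ᶠ x : ℝ in atTop, c * log x ^ k ≤ x := by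
  filter_upwards [isLittleO_pow_log_id_atTop.bound (inv_pos.2 hc), eventually_ge_atTop 0]
    with x hx hx0
  rw [norm_eq_abs, norm_eq_abs, id, abs_of_nonneg hx0, ← div_eq_inv_mul, le_div_iff₀' hc] at hx
  exact (mul_le_mul_of_nonneg_left (le_abs_self _) hc.le).trans hx

theorem aas_expansion_medium_sets_general (p : ℕ → ℝ) (hp0 : ∀ n, 0 ≤ p n) (hp1 : ∀ n, p n ≤ 1)
    (hlow : Filter.Tendsto (fun n : ℕ => (n : ℝ) * p n - Real.log n) Filter.atTop Filter.atTop) :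
    Filter.Tendsto
      (fun n : ℕ => grProb n (p n) fun G =>
        ∀ S : Finset (Fin n),
          (n : ℝ) / (Real.log n) ^ 3 ≤ (S.card : ℝ) → (S.card : ℝ) ≤ (n : ℝ) / 2 →
          Real.log n / 10 * S.card ≤ (crossCount G S : ℝ))
      Filter.atTop (nhds 1) := by
  have hloglog : ∀ᶠ x : ℝ in atTop, 10 * (1 + 3 * log x) ≤ x := by
    filter_upwards [eventually_mul_log_pow_le (by norm_num : (0 : ℝ) < 60) 1,
      eventually_ge_atTop 20] with x hx hx20
    linarith [pow_one (log x)]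
  have hlower : Tendsto (fun n : ℕ => 1 - 2 / (n : ℝ)) atTop (nhds 1) := by
    simpa using tendsto_const_nhds.sub (tendsto_const_div_atTop_nhds_zero_nat (2 : ℝ))
  refine tendsto_of_tendsto_of_tendsto_of_le_of_le' hlower tendsto_const_nhds ?_
    (Eventually.of_forall fun n => grProb_le_one (hp0 n) (hp1 n) _)
  filter_upwards [hlow.eventually_ge_atTop 0,
    (tendsto_log_atTop.comp tendsto_natCast_atTop_atTop).eventually hloglog,
    tendsto_natCast_atTop_atTop.eventually
      (eventually_mul_log_pow_le (by norm_num : (0 : ℝ) < 20) 3)]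
    with n hnp hlog hn
  exact one_sub_two_div_le_grProb_expansion (hp0 n) (hp1 n) (by linarith) hlog hn

theorem aas_expansion_medium_sets (p : ℕ → ℝ) (hp0 : ∀ n, 0 ≤ p n) (hp1 : ∀ n, p n ≤ 1)
    (hlow : Filter.Tendsto (fun n : ℕ => (n : ℝ) * p n - Real.log n) Filter.atTop Filter.atTop)
    (hhigh : ∀ᶠ n : ℕ in Filter.atTop, p n ≤ 1.1 * Real.log n / n) :
    Filter.Tendsto
      (fun n : ℕ => grProb n (p n) fun G =>
        ∀ S : Finset (Fin n),
          (n : ℝ) / (Real.log n) ^ 3 ≤ (S.card : ℝ) → (S.card : ℝ) ≤ (n : ℝ) / 2 →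
          Real.log n / 10 * S.card ≤ (crossCount G S : ℝ))
      Filter.atTop (nhds 1) :=
  aas_expansion_medium_sets_general p hp0 hp1 hlow
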